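/- In ATL* with the subjective imperfect-information memoryless semantics, the knowledge operator is definable: for every iCGS G, state s, agent i, and formula φ, (G,s) ⊨_subj K_i φ if and only if (G,s) ⊨_subj ⟨⟨i⟩⟩ (φ U φ), where (G,s) ⊨ K_i φ means that (G,s') ⊨ φ for all s' with s' ~_i s. -/

import Mathlib

/-- An imperfect-information concurrent game structure (iCGS), given as raw data;
the defining axioms are collected in `iCGS.Valid`. -/
structure iCGS (Ag AP S Act : Type) where
  init : S
  indist : Ag → S → S → Prop
  protocol : Ag → S → Set Act
  trans : S → (Ag → Act) → S → Prop
  label : S → Set AP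

namespace iCGS

variable {Ag AP S S' Act Act' : Type}

/-- The axioms of an iCGS. -/
def Valid (G : iCGS Ag AP S Act) : Prop :=
  (∀ i, Equivalence (G.indist i)) ∧
  (∀ i s, (G.protocol i s).Nonempty) ∧
  (∀ i s s', G.indist i s s' → G.protocol i s = G.protocol i s') ∧
  (∀ s a, (∃ s', G.trans s a s') ↔ ∀ i, a i ∈ G.protocol i s)

/-- Common-knowledge reachability for coalition `A`:
reflexive-transitive closure of the union of the `∼ᵢ`, `i ∈ A`. -/
def ck (G : iCGS Ag AP S Act) (A : Set Ag) : S → S → Prop :=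
  Relation.ReflTransGen (fun s s' => ∃ i ∈ A, G.indist i s s')

/-- Common-knowledge neighbourhood `C_A(q)`. -/
def CKN (G : iCGS Ag AP S Act) (A : Set Ag) (q : S) : Set S := {r | G.ck A q r}

/-- "Everybody knows" neighbourhood `E_A(q)`. -/
def EKN (G : iCGS Ag AP S Act) (A : Set Ag) (q : S) : Set S :=
  {r | ∃ i ∈ A, G.indist i q r}

/-- `σ` is a partial uniform strategy for coalition `A` with domain `Q`. -/
def IsPStrat (G : iCGS Ag AP S Act) (A : Set Ag) (Q : Set S) (σ : Ag → S → Act) : Prop :=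
  (∀ i ∈ A, ∀ s ∈ Q, σ i s ∈ G.protocol i s) ∧
  (∀ i ∈ A, ∀ s ∈ Q, ∀ t ∈ Q, G.indist i s t → σ i s = σ i t)

/-- `σ` is a (total) uniform memoryless strategy for coalition `A`. -/
def IsStrat (G : iCGS Ag AP S Act) (A : Set Ag) (σ : Ag → S → Act) : Prop :=
  G.IsPStrat A Set.univ σ

/-- Successors of `s` under joint actions compatible with `σ` on coalition `A`. -/
def succ (G : iCGS Ag AP S Act) (A : Set Ag) (σ : Ag → S → Act) (s : S) : Set S :=
  {t | ∃ a : Ag → Act, (∀ i ∈ A, a i = σ i s) ∧ G.trans s a t}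

/-- Objective outcome set of strategy `σ` at `q` (runs as infinite state sequences). -/
def OutObj (G : iCGS Ag AP S Act) (A : Set Ag) (σ : Ag → S → Act) (q : S) :
    Set (ℕ → S) :=
  {lam | lam 0 = q ∧ ∀ j, lam (j + 1) ∈ G.succ A σ (lam j)}

/-- Subjective outcome set: union of objective outcomes over states indistinguishable
from `q` for some member of the coalition. -/
def OutSubj (G : iCGS Ag AP S Act) (A : Set Ag) (σ : Ag → S → Act) (q : S) :
    Set (ℕ → S) :=
  {lam | ∃ i ∈ A, ∃ r, G.indist i q r ∧ lam ∈ G.OutObj A σ r}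

/-- Outcome set: subjective (`x = true`) or objective (`x = false`).
(For a nonempty coalition the subjective case coincides with the union of
objective outcomes over indistinguishable states, by reflexivity; for the
empty coalition it degenerates to the objective case.) -/
def Out (G : iCGS Ag AP S Act) (x : Bool) (A : Set Ag) (σ : Ag → S → Act) (q : S) :
    Set (ℕ → S) :=
  if x then G.OutObj A σ q ∪ G.OutSubj A σ q else G.OutObj A σ q

/-- `R` is a simulation for coalition `A` from `G` to `G'` (Def. of simulation):
existence of a strategy simulator over common-knowledge neighbourhoods with
(a) atom agreement, (b) epistemic back-condition, (c) strategy transfer, and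
(2) injectivity modulo common-knowledge neighbourhoods. -/
def IsSimulation (G : iCGS Ag AP S Act) (G' : iCGS Ag AP S' Act') (A : Set Ag)
    (R : S → S' → Prop) : Prop :=
  (∃ ST : Set S → Set S' → (Ag → S → Act) → (Ag → S' → Act'),
    ∀ q q', R q q' →
      (∀ σ, G.IsPStrat A (G.CKN A q) σ →
        G'.IsPStrat A (G'.CKN A q') (ST (G.CKN A q) (G'.CKN A q') σ)) ∧
      (∀ r ∈ G.CKN A q, ∀ r' ∈ G'.CKN A q', R r r' →
        ∀ σ, G.IsPStrat A (G.CKN A q) σ →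
          ∀ s' ∈ G'.succ A (ST (G.CKN A q) (G'.CKN A q') σ) r',
            ∃ s ∈ G.succ A σ r, R s s')) ∧
  (∀ q q', R q q' → G.label q = G'.label q') ∧
  (∀ q q', R q q' → ∀ i ∈ A, ∀ r', G'.indist i q' r' →
    ∃ r, G.indist i q r ∧ R r r') ∧
  (∀ q₁ q₂ q', R q₁ q' → R q₂ q' → G.CKN A q₁ = G.CKN A q₂)

/-- `R` is a bisimulation for `A` iff both `R` and its converse are `A`-simulations. -/
def IsBisimulation (G : iCGS Ag AP S Act) (G' : iCGS Ag AP S' Act') (A : Set Ag)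
    (R : S → S' → Prop) : Prop :=
  G.IsSimulation G' A R ∧ G'.IsSimulation G A (fun q' q => R q q')

end iCGS
mutual
/-- State formulas of ATL*. -/
inductive SF (AP Ag : Type) : Type where
  | atom : AP → SF AP Ag
  | neg : SF AP Ag → SF AP Ag
  | imp : SF AP Ag → SF AP Ag → SF AP Ag
  | coal : Set Ag → PF AP Ag → SF AP Ag
/-- Path formulas of ATL*. -/
inductive PF (AP Ag : Type) : Type where
  | of : SF AP Ag → PF AP Ag
  | neg : PF AP Ag → PF AP Ag
  | imp : PF AP Ag → PF AP Ag → PF AP Ag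
  | next : PF AP Ag → PF AP Ag
  | untl : PF AP Ag → PF AP Ag → PF AP Ag
end

variable {Ag AP S Act : Type}

mutual
/-- Satisfaction of ATL* state formulas; `x = true` is the subjective,
`x = false` the objective imperfect-information memoryless semantics. -/
def SSat (G : iCGS Ag AP S Act) (x : Bool) : S → SF AP Ag → Prop
  | s, .atom p => p ∈ G.label s
  | s, .neg φ => ¬ SSat G x s φ
  | s, .imp φ ψ => SSat G x s φ → SSat G x s ψ
  | s, .coal A ψ =>
      ∃ σ, G.IsStrat A σ ∧ ∀ lam ∈ G.Out x A σ s, PSat G x lam ψ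
/-- Satisfaction of ATL* path formulas on runs. -/
def PSat (G : iCGS Ag AP S Act) (x : Bool) : (ℕ → S) → PF AP Ag → Prop
  | lam, .of φ => SSat G x (lam 0) φ
  | lam, .neg ψ => ¬ PSat G x lam ψ
  | lam, .imp ψ χ => PSat G x lam ψ → PSat G x lam χ
  | lam, .next ψ => PSat G x (fun n => lam (n + 1)) ψ
  | lam, .untl ψ χ => ∃ j, PSat G x (fun n => lam (n + j)) χ ∧
      ∀ k < j, PSat G x (fun n => lam (n + k)) ψ
end

mutual
/-- `φ` is an `A`-formula: `A` is the only coalition occurring in it. -/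
def SOnly (A : Set Ag) : SF AP Ag → Prop
  | .atom _ => True
  | .neg φ => SOnly A φ
  | .imp φ ψ => SOnly A φ ∧ SOnly A ψ
  | .coal B ψ => B = A ∧ POnly A ψ
def POnly (A : Set Ag) : PF AP Ag → Prop
  | .of φ => SOnly A φ
  | .neg ψ => POnly A ψ
  | .imp ψ χ => POnly A ψ ∧ POnly A χ
  | .next ψ => POnly A ψ
  | .untl ψ χ => POnly A ψ ∧ POnly A χ
end

/-!
`φ U φ` holds on a run exactly when `φ` holds at its first state, so `⟨⟨i⟩⟩ (φ U φ)` asks for a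
uniform strategy of `i` under which `φ` holds at the first state of every subjective outcome.
Whatever the strategy, these first states are exactly the states `i` cannot tell apart from `s`:
every outcome starts at one, and since some transition is always enabled, each of them starts an
outcome. A uniform strategy exists because protocols are nonempty and agree on
indistinguishable states.
-/

theorem PSat_untl_self_iff (G : iCGS Ag AP S Act) (x : Bool) (lam : ℕ → S) (ψ : PF AP Ag) :
    PSat G x lam (.untl ψ ψ) ↔ PSat G x lam ψ := by
  simp only [PSat]
  constructor
  · rintro ⟨j, hj, hlt⟩
    rcases j with _ | j
    · exact hj
    · exact hlt 0 j.succ_pos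
  · exact fun h => ⟨0, h, fun k hk => absurd hk k.not_lt_zero⟩

namespace iCGS

theorem Valid.exists_isStrat {G : iCGS Ag AP S Act} (hG : G.Valid) (A : Set Ag) :
    ∃ σ, G.IsStrat A σ := by
  obtain ⟨-, hne, hprot, -⟩ := hG
  refine ⟨fun j t => (hne j t).some, fun j _ t _ => (hne j t).some_mem, ?_⟩
  intro j _ t _ u _ htu
  simp only [hprot j t u htu]

theorem Valid.succ_nonempty {G : iCGS Ag AP S Act} (hG : G.Valid) {A : Set Ag}
    {σ : Ag → S → Act} (hσ : G.IsStrat A σ) (t : S) : (G.succ A σ t).Nonempty := by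
  classical
  obtain ⟨-, hne, -, htrans⟩ := hG
  let a : Ag → Act := fun j => if j ∈ A then σ j t else (hne j t).some
  have ha : ∀ j, a j ∈ G.protocol j t := by
    intro j
    by_cases hj : j ∈ A
    · simpa only [a, if_pos hj] using hσ.1 j hj t (Set.mem_univ t)
    · simpa only [a, if_neg hj] using (hne j t).some_mem
  obtain ⟨u, hu⟩ := (htrans t a).mpr ha
  exact ⟨u, a, fun j hj => if_pos hj, hu⟩

theorem exists_mem_OutObj (G : iCGS Ag AP S Act) {A : Set Ag} {σ : Ag → S → Act}
    (hsucc : ∀ t, (G.succ A σ t).Nonempty) (q : S) : ∃ lam, lam ∈ G.OutObj A σ q :=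
  ⟨fun n => Nat.rec q (fun _ t => (hsucc t).some) n, rfl, fun _ => (hsucc _).some_mem⟩

theorem eq_or_mem_EKN_of_mem_Out (G : iCGS Ag AP S Act) {x : Bool} {A : Set Ag}
    {σ : Ag → S → Act} {q : S} {lam : ℕ → S} (hlam : lam ∈ G.Out x A σ q) :
    lam 0 = q ∨ lam 0 ∈ G.EKN A q := by
  cases x
  · exact Or.inl hlam.1
  · rcases hlam with hobj | ⟨j, hj, r, hqr, hr, -⟩
    · exact Or.inl hobj.1
    · exact Or.inr ⟨j, hj, hr ▸ hqr⟩

theorem mem_Out_true_of_indist (G : iCGS Ag AP S Act) {A : Set Ag} {σ : Ag → S → Act}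
    {i : Ag} (hi : i ∈ A) {q r : S} (hqr : G.indist i q r) {lam : ℕ → S}
    (hlam : lam ∈ G.OutObj A σ r) : lam ∈ G.Out true A σ q :=
  Or.inr ⟨i, hi, r, hqr, hlam⟩

end iCGS

/-- in the subjective semantics the knowledge operator is definable:
`(G,s) ⊨ K_i φ` iff `(G,s) ⊨ ⟨⟨i⟩⟩ (φ U φ)`. -/
theorem knowledge_definable_subjective {Ag AP S Act : Type}
    (G : iCGS Ag AP S Act) (hG : G.Valid) (s : S) (i : Ag) (φ : SF AP Ag) :
    (∀ s', G.indist i s' s → SSat G true s' φ) ↔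
    SSat G true s (SF.coal {i} (PF.untl (PF.of φ) (PF.of φ))) := by
  have hequiv := hG.1 i
  simp only [SSat, PSat_untl_self_iff]
  simp only [PSat]
  constructor
  · intro hK
    obtain ⟨σ, hσ⟩ := hG.exists_isStrat {i}
    refine ⟨σ, hσ, fun lam hlam => ?_⟩
    rcases G.eq_or_mem_EKN_of_mem_Out hlam with hstart | ⟨j, rfl, hs⟩
    · exact hstart ▸ hK s (hequiv.refl s)
    · exact hK _ (hequiv.symm hs)
  · rintro ⟨σ, hσ, hout⟩ s' hs'
    obtain ⟨lam, hlam⟩ := G.exists_mem_OutObj (hG.succ_nonempty hσ) s'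
    have hsubj := G.mem_Out_true_of_indist (Set.mem_singleton i) (hequiv.symm hs') hlam
    exact hlam.1 ▸ hout lam hsubj
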